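/- arXiv:1512.01584 — 4 statements merged into one kernel-verified Lean document; each statement's English description precedes it below -/
import Mathlib

section
/- Let A be an n-by-n nonsingular Hermitian matrix and let (λ, x) be an eigenpair of A (so Ax = λx with x ≠ 0). Then for any nonzero vector y in ℂ^n, |λ/λ_max| · sin∠(x, Ay) ≤ sin∠(x, y) ≤ |λ/λ_min| · sin∠(x, Ay), where λ_min and λ_max are the smallest and largest magnitude eigenvalues of A, respectively. -/
open Matrix

noncomputable def hnorm {n : ℕ} (x : Fin n → ℂ) : ℝ :=
  Real.sqrt ((star x ⬝ᵥ x).re)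

noncomputable def cosAngle {n : ℕ} (x y : Fin n → ℂ) : ℝ :=
  ‖star x ⬝ᵥ y‖ / (hnorm x * hnorm y)

noncomputable def sinAngle {n : ℕ} (x y : Fin n → ℂ) : ℝ :=
  Real.sqrt (1 - cosAngle x y ^ 2)

noncomputable def sinAngleSub {n : ℕ} (x : Fin n → ℂ) (K : Submodule ℂ (Fin n → ℂ)) : ℝ :=
  sInf {s : ℝ | ∃ y ∈ K, y ≠ 0 ∧ s = sinAngle x y}

noncomputable def sinAngleSubSub {n : ℕ} (X K : Submodule ℂ (Fin n → ℂ)) : ℝ :=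
  sInf {s : ℝ | ∃ x ∈ X, x ≠ 0 ∧ ∃ y ∈ K, y ≠ 0 ∧ s = sinAngle x y}

def Eigenpair {n : ℕ} (A : Matrix (Fin n) (Fin n) ℂ) (μ : ℂ) (v : Fin n → ℂ) : Prop :=
  v ≠ 0 ∧ A *ᵥ v = μ • v

noncomputable def specNorm {n : ℕ} (M : Matrix (Fin n) (Fin n) ℂ) : ℝ :=
  sSup {r : ℝ | ∃ v : Fin n → ℂ, hnorm v = 1 ∧ r = hnorm (M *ᵥ v)}

noncomputable def frobNorm {m p : ℕ} (M : Matrix (Fin m) (Fin p) ℂ) : ℝ :=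
  Real.sqrt (∑ i, ∑ j, ‖M i j‖ ^ 2)

noncomputable def specCond {n : ℕ} (M : Matrix (Fin n) (Fin n) ℂ) : ℝ :=
  sSup {r : ℝ | ∃ μ ∈ spectrum ℂ M, r = ‖μ‖} /
    sInf {r : ℝ | ∃ μ ∈ spectrum ℂ M, r = ‖μ‖}

def RitzPair {n : ℕ} (A : Matrix (Fin n) (Fin n) ℂ) (K : Submodule ℂ (Fin n → ℂ))
    (μ : ℂ) (u : Fin n → ℂ) : Prop :=
  u ∈ K ∧ u ≠ 0 ∧ ∀ y ∈ K, star y ⬝ᵥ (A *ᵥ u - μ • u) = 0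

def HarmonicRitzPair {n : ℕ} (A : Matrix (Fin n) (Fin n) ℂ) (σ : ℂ)
    (K : Submodule ℂ (Fin n → ℂ)) (θ : ℂ) (v : Fin n → ℂ) : Prop :=
  v ∈ K ∧ v ≠ 0 ∧ ∀ y ∈ K, star ((A - σ • 1) *ᵥ y) ⬝ᵥ (A *ᵥ v - θ • v) = 0

def THarmonicRitzPair {n : ℕ} (A T : Matrix (Fin n) (Fin n) ℂ) (σ : ℂ)
    (K : Submodule ℂ (Fin n → ℂ)) (θ : ℂ) (v : Fin n → ℂ) : Prop :=
  v ∈ K ∧ v ≠ 0 ∧ ∀ y ∈ K, star ((A - σ • 1) *ᵥ y) ⬝ᵥ (T *ᵥ (A *ᵥ v - θ • v)) = 0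

def IsOrthProjOn {n : ℕ} (P : Matrix (Fin n) (Fin n) ℂ)
    (Q : Submodule ℂ (Fin n → ℂ)) : Prop :=
  P.IsHermitian ∧ P * P = P ∧ (∀ v, P *ᵥ v ∈ Q) ∧ (∀ v ∈ Q, P *ᵥ v = v)

/-!
Split `y = c • x + z` with `z ⟂ x`. Because `A` is Hermitian and `x` is an eigenvector, `A` maps
`x^⟂` into itself, so `A y = (λ c) • x + A z` is the corresponding splitting of `A y`. Hence
`sin∠(x, y) = ‖z‖ / ‖y‖` and `sin∠(x, A y) = ‖A z‖ / ‖A y‖`, with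
`‖y‖² = ‖c • x‖² + ‖z‖²` and `‖A y‖² = |λ|² ‖c • x‖² + ‖A z‖²`. Expanding `z` in an orthonormal
eigenbasis gives `|λ_min| ‖z‖ ≤ ‖A z‖ ≤ |λ_max| ‖z‖`; together with `|λ_min| ≤ |λ| ≤ |λ_max|`
both bounds become polynomial inequalities after squaring.
-/

open Module.End
open scoped InnerProductSpace

section InnerProductSpace

variable {𝕜 E : Type*} [RCLike 𝕜] [NormedAddCommGroup E] [InnerProductSpace 𝕜 E]

variable (𝕜) in
noncomputable def sinAcuteAngle (x y : E) : ℝ :=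
  √(1 - (‖⟪x, y⟫_𝕜‖ / (‖x‖ * ‖y‖)) ^ 2)

theorem exists_eq_smul_add_of_inner_eq_zero (x y : E) :
    ∃ (c : 𝕜) (z : E), y = c • x + z ∧ ⟪x, z⟫_𝕜 = 0 := by
  obtain ⟨w, hw, z, hz, rfl⟩ := (𝕜 ∙ x).exists_add_mem_mem_orthogonal y
  obtain ⟨c, rfl⟩ := Submodule.mem_span_singleton.1 hw
  exact ⟨c, z, rfl, Submodule.mem_orthogonal_singleton_iff_inner_right.1 hz⟩

theorem norm_smul_add_sq_of_inner_eq_zero {x z : E} (c : 𝕜) (hz : ⟪x, z⟫_𝕜 = 0) :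
    ‖c • x + z‖ ^ 2 = ‖c • x‖ ^ 2 + ‖z‖ ^ 2 := by
  simpa only [sq] using norm_add_sq_eq_norm_sq_add_norm_sq_of_inner_eq_zero (c • x) z
    (by rw [inner_smul_left, hz, mul_zero])

theorem sinAcuteAngle_smul_add {x z : E} (c : 𝕜) (hx : x ≠ 0) (hz : ⟪x, z⟫_𝕜 = 0)
    (hy : c • x + z ≠ 0) :
    sinAcuteAngle 𝕜 x (c • x + z) = ‖z‖ / ‖c • x + z‖ := by
  have hxn : 0 < ‖x‖ := norm_pos_iff.2 hx
  have hyn : 0 < ‖c • x + z‖ := norm_pos_iff.2 hy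
  have hinner : ‖⟪x, c • x + z⟫_𝕜‖ = ‖c • x‖ * ‖x‖ := by
    rw [inner_add_right, hz, add_zero, inner_smul_right, inner_self_eq_norm_sq_to_K,
      norm_mul, norm_pow, RCLike.norm_ofReal, abs_norm, norm_smul]
    ring
  have hpyth := norm_smul_add_sq_of_inner_eq_zero c hz
  rw [sinAcuteAngle, hinner, ← Real.sqrt_sq (div_nonneg (norm_nonneg z) hyn.le)]
  congr 1
  field_simp
  linarith

namespace LinearMap.IsSymmetric

variable {T : E →ₗ[𝕜] E}

theorem inner_apply_eq_zero_of_apply_eq_smul (hT : T.IsSymmetric) {l : 𝕜} {x z : E}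
    (hx : T x = l • x) (hz : ⟪x, z⟫_𝕜 = 0) : ⟪x, T z⟫_𝕜 = 0 := by
  rw [← hT, hx, inner_smul_left, hz, mul_zero]

variable [FiniteDimensional 𝕜 E]

theorem norm_apply_sq_eq_sum (hT : T.IsSymmetric) (v : E) :
    ‖T v‖ ^ 2 =
      ∑ i, hT.eigenvalues rfl i ^ 2 * ‖(hT.eigenvectorBasis rfl).repr v i‖ ^ 2 := by
  rw [← (hT.eigenvectorBasis rfl).repr.norm_map, EuclideanSpace.norm_sq_eq]
  simp_rw [hT.eigenvectorBasis_apply_self_apply, norm_mul, RCLike.norm_ofReal, mul_pow, sq_abs]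

theorem sq_mul_norm_sq_le_norm_apply_sq (hT : T.IsSymmetric) {m : ℝ} (hm0 : 0 ≤ m)
    (hm : ∀ μ, HasEigenvalue T μ → m ≤ ‖μ‖) (v : E) :
    m ^ 2 * ‖v‖ ^ 2 ≤ ‖T v‖ ^ 2 := by
  rw [hT.norm_apply_sq_eq_sum, ← (hT.eigenvectorBasis rfl).repr.norm_map v,
    EuclideanSpace.norm_sq_eq, Finset.mul_sum]
  refine Finset.sum_le_sum fun i _ ↦ mul_le_mul_of_nonneg_right ?_ (by positivity)
  simpa [sq_abs] using pow_le_pow_left₀ hm0 (hm _ (hT.hasEigenvalue_eigenvalues rfl i)) 2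

theorem norm_apply_sq_le_sq_mul_norm_sq (hT : T.IsSymmetric) {M : ℝ}
    (hM : ∀ μ, HasEigenvalue T μ → ‖μ‖ ≤ M) (v : E) :
    ‖T v‖ ^ 2 ≤ M ^ 2 * ‖v‖ ^ 2 := by
  rw [hT.norm_apply_sq_eq_sum, ← (hT.eigenvectorBasis rfl).repr.norm_map v,
    EuclideanSpace.norm_sq_eq, Finset.mul_sum]
  refine Finset.sum_le_sum fun i _ ↦ mul_le_mul_of_nonneg_right ?_ (by positivity)
  simpa [sq_abs] using
    pow_le_pow_left₀ (norm_nonneg _) (hM _ (hT.hasEigenvalue_eigenvalues rfl i)) 2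

theorem mul_sinAcuteAngle_le_and_le (hT : T.IsSymmetric) {l : 𝕜} {x y : E}
    (hx : T x = l • x) (hx0 : x ≠ 0) (hy : T y ≠ 0) {m M : ℝ} (hm0 : 0 ≤ m)
    (hm : ∀ μ, HasEigenvalue T μ → m ≤ ‖μ‖) (hM : ∀ μ, HasEigenvalue T μ → ‖μ‖ ≤ M) :
    m * sinAcuteAngle 𝕜 x y ≤ ‖l‖ * sinAcuteAngle 𝕜 x (T y) ∧
      ‖l‖ * sinAcuteAngle 𝕜 x (T y) ≤ M * sinAcuteAngle 𝕜 x y := by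
  obtain ⟨c, z, rfl, hz⟩ := exists_eq_smul_add_of_inner_eq_zero (𝕜 := 𝕜) x y
  have hTz := hT.inner_apply_eq_zero_of_apply_eq_smul hx hz
  have hy0 : c • x + z ≠ 0 := fun h ↦ hy (by rw [h, map_zero])
  rw [map_add, map_smul, hx, smul_smul] at hy ⊢
  have hu2 := norm_smul_add_sq_of_inner_eq_zero c hz
  have hv2 := norm_smul_add_sq_of_inner_eq_zero (c * l) hTz
  rw [show ‖(c * l) • x‖ = ‖l‖ * ‖c • x‖ by rw [mul_comm, mul_smul, norm_smul]] at hv2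
  have hl : HasEigenvalue T l := hasEigenvalue_of_hasEigenvector ⟨mem_eigenspace_iff.2 hx, hx0⟩
  have hml : m ^ 2 ≤ ‖l‖ ^ 2 := pow_le_pow_left₀ hm0 (hm l hl) 2
  have hlM : ‖l‖ ^ 2 ≤ M ^ 2 := pow_le_pow_left₀ (norm_nonneg l) (hM l hl) 2
  have hM0 : 0 ≤ M := (norm_nonneg l).trans (hM l hl)
  have hlow := hT.sq_mul_norm_sq_le_norm_apply_sq hm0 hm z
  have hupp := hT.norm_apply_sq_le_sq_mul_norm_sq hM z
  have hx2 : 0 ≤ ‖l‖ ^ 2 * ‖c • x‖ ^ 2 := by positivity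
  have hz2 : 0 ≤ ‖z‖ ^ 2 * ‖T z‖ ^ 2 := by positivity
  rw [sinAcuteAngle_smul_add c hx0 hz hy0, sinAcuteAngle_smul_add _ hx0 hTz hy,
    mul_div_assoc', mul_div_assoc', mul_div_assoc', div_le_div_iff₀ (norm_pos_iff.2 hy0)
    (norm_pos_iff.2 hy), div_le_div_iff₀ (norm_pos_iff.2 hy) (norm_pos_iff.2 hy0)]
  constructor <;> refine (pow_le_pow_iff_left₀ (by positivity) (by positivity) two_ne_zero).1 ?_ <;>
    rw [mul_pow, mul_pow, mul_pow, mul_pow, hu2, hv2]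
  · linarith [mul_le_mul_of_nonneg_left hlow hx2, mul_le_mul_of_nonneg_right hml hz2]
  · linarith [mul_le_mul_of_nonneg_left hupp hx2, mul_le_mul_of_nonneg_right hlM hz2]

end LinearMap.IsSymmetric

end InnerProductSpace

section Matrix

open WithLp

variable {n : ℕ}

theorem hnorm_eq_norm_toLp (x : Fin n → ℂ) : hnorm x = ‖toLp 2 x‖ := by
  rw [hnorm, norm_eq_sqrt_re_inner (𝕜 := ℂ), EuclideanSpace.inner_eq_star_dotProduct,
    dotProduct_comm]
  rfl

theorem sinAngle_eq_sinAcuteAngle (x y : Fin n → ℂ) :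
    sinAngle x y = sinAcuteAngle ℂ (toLp 2 x) (toLp 2 y) := by
  rw [sinAngle, cosAngle, hnorm_eq_norm_toLp, hnorm_eq_norm_toLp, sinAcuteAngle,
    EuclideanSpace.inner_eq_star_dotProduct, dotProduct_comm]

theorem exists_eigenpair_of_hasEigenvalue {A : Matrix (Fin n) (Fin n) ℂ} {μ : ℂ}
    (hμ : HasEigenvalue (toEuclideanLin A) μ) : ∃ v, Eigenpair A μ v := by
  obtain ⟨v, hv, hv0⟩ := hμ.exists_hasEigenvector
  exact ⟨ofLp v, by simpa using hv0, congrArg ofLp (mem_eigenspace_iff.1 hv)⟩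

theorem Eigenpair.eigenvalue_ne_zero {A : Matrix (Fin n) (Fin n) ℂ} {μ : ℂ} {v : Fin n → ℂ}
    (h : Eigenpair A μ v) (hA : Function.Injective A.mulVec) : μ ≠ 0 := by
  rintro rfl
  exact h.1 (hA (by rw [h.2, zero_smul, mulVec_zero]))

end Matrix

theorem stmt0_sin_two_sided_bound_general
    {n : ℕ} (A : Matrix (Fin n) (Fin n) ℂ) (hA : A.IsHermitian) (hdet : IsUnit A.det)
    (l : ℂ) (x : Fin n → ℂ) (hx : Eigenpair A l x)
    (lmin lmax : ℂ) (xmin : Fin n → ℂ)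
    (hmin : Eigenpair A lmin xmin)
    (hminLe : ∀ μ v, Eigenpair A μ v → ‖lmin‖ ≤ ‖μ‖)
    (hmaxGe : ∀ μ v, Eigenpair A μ v → ‖μ‖ ≤ ‖lmax‖)
    (y : Fin n → ℂ) (hy : y ≠ 0) :
    ‖l / lmax‖ * sinAngle x (A *ᵥ y) ≤ sinAngle x y ∧
      sinAngle x y ≤ ‖l / lmin‖ * sinAngle x (A *ᵥ y) := by
  have hinj : Function.Injective A.mulVec :=
    mulVec_injective_iff_isUnit.2 ((isUnit_iff_isUnit_det A).2 hdet)
  have hlmin : 0 < ‖lmin‖ := norm_pos_iff.2 (hmin.eigenvalue_ne_zero hinj)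
  have hAy : toEuclideanLin A (WithLp.toLp 2 y) ≠ 0 := by
    simpa using hinj.ne (a₂ := 0) hy
  obtain ⟨hlow, hupp⟩ := (isSymmetric_toEuclideanLin_iff.2 hA).mul_sinAcuteAngle_le_and_le
    (congrArg (WithLp.toLp 2) hx.2) (by simpa using hx.1) hAy (norm_nonneg lmin)
    (fun μ hμ ↦ (exists_eigenpair_of_hasEigenvalue hμ).elim (hminLe μ))
    (fun μ hμ ↦ (exists_eigenpair_of_hasEigenvalue hμ).elim (hmaxGe μ))
  rw [sinAngle_eq_sinAcuteAngle, sinAngle_eq_sinAcuteAngle, norm_div, norm_div,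
    div_mul_eq_mul_div, div_mul_eq_mul_div, le_div_iff₀ hlmin]
  exact ⟨div_le_of_le_mul₀ (norm_nonneg _) (Real.sqrt_nonneg _) (hupp.trans_eq (mul_comm _ _)),
    (mul_comm _ _).trans_le hlow⟩

/-- Lemma 2.1 (two-sided sine bound for a Hermitian nonsingular matrix). -/
theorem stmt0_sin_two_sided_bound
    {n : ℕ} (A : Matrix (Fin n) (Fin n) ℂ) (hA : A.IsHermitian) (hdet : IsUnit A.det)
    (l : ℂ) (x : Fin n → ℂ) (hx : Eigenpair A l x)
    (lmin lmax : ℂ) (xmin xmax : Fin n → ℂ)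
    (hmin : Eigenpair A lmin xmin) (hmax : Eigenpair A lmax xmax)
    (hminLe : ∀ μ v, Eigenpair A μ v → ‖lmin‖ ≤ ‖μ‖)
    (hmaxGe : ∀ μ v, Eigenpair A μ v → ‖μ‖ ≤ ‖lmax‖)
    (y : Fin n → ℂ) (hy : y ≠ 0) :
    ‖l / lmax‖ * sinAngle x (A *ᵥ y) ≤ sinAngle x y ∧
      sinAngle x y ≤ ‖l / lmin‖ * sinAngle x (A *ᵥ y) :=
  stmt0_sin_two_sided_bound_general A hA hdet l x hx lmin lmax xmin hmin hminLe hmaxGe y hy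
end

section
/- Let A be an n-by-n nonsingular Hermitian matrix with eigenpair (λ, x) where λ is an eigenvalue of smallest absolute value among all eigenvalues of A (λ = λ_min). Then for every nonzero vector y in ℂ^n, sin∠(x, y) ≤ sin∠(x, Ay); that is, the approximation quality of y with respect to x does not improve after multiplication with A. -/
open Matrix
open scoped ComplexOrder

/-!
Because `A` is Hermitian, `x* (A y) = conj λ · x* y`, so the numerator of `cos∠(x, A y)` is
`|λ| |x* y|`. Expanding `y` in an orthonormal eigenbasis of `A` gives `‖A y‖ ≥ |λ_min| ‖y‖`,
since every eigenvalue has modulus at least `|λ_min|`. Hence `cos∠(x, A y) ≤ cos∠(x, y)`.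
-/

open scoped InnerProductSpace

section
variable {𝕜 E : Type*} [RCLike 𝕜] [NormedAddCommGroup E] [InnerProductSpace 𝕜 E]
  [FiniteDimensional 𝕜 E]

open Module.End in
theorem LinearMap.IsSymmetric.mul_norm_le_norm_apply {T : E →ₗ[𝕜] E} (hT : T.IsSymmetric)
    {c : ℝ} (hc : ∀ μ, HasEigenvalue T μ → c ≤ ‖μ‖) (v : E) : c * ‖v‖ ≤ ‖T v‖ := by
  rcases le_or_gt c 0 with hc0 | hc0
  · exact (mul_nonpos_of_nonpos_of_nonneg hc0 (norm_nonneg v)).trans (norm_nonneg _)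
  set b := hT.eigenvectorBasis rfl
  have hcoord : ∀ i, ‖⟪b i, T v⟫_𝕜‖ = |hT.eigenvalues rfl i| * ‖⟪b i, v⟫_𝕜‖ := fun i => by
    rw [← hT, hT.apply_eigenvectorBasis, inner_smul_left, norm_mul, RCLike.norm_conj,
      RCLike.norm_ofReal]
  have hsq : (c * ‖v‖) ^ 2 ≤ ‖T v‖ ^ 2 := by
    rw [mul_pow, ← b.sum_sq_norm_inner_right v, ← b.sum_sq_norm_inner_right (T v), Finset.mul_sum]
    gcongr with i
    rw [hcoord, mul_pow]
    gcongr
    simpa using hc _ (hT.hasEigenvalue_eigenvalues rfl i)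
  exact pow_le_pow_iff_left₀ (by positivity) (norm_nonneg _) two_ne_zero |>.mp hsq
end

theorem hnorm_eq_norm_toLp_s13 {n : ℕ} (v : Fin n → ℂ) :
    hnorm v = ‖(WithLp.toLp 2 v : EuclideanSpace ℂ (Fin n))‖ := by
  rw [hnorm, norm_eq_sqrt_re_inner (𝕜 := ℂ), EuclideanSpace.inner_toLp_toLp, dotProduct_comm]
  rfl

theorem hnorm_nonneg {n : ℕ} (v : Fin n → ℂ) : 0 ≤ hnorm v :=
  Real.sqrt_nonneg _

theorem hnorm_pos {n : ℕ} {v : Fin n → ℂ} (hv : v ≠ 0) : 0 < hnorm v := by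
  rw [hnorm_eq_norm_toLp_s13, norm_pos_iff]
  exact fun h => hv (congrArg WithLp.ofLp h)

theorem cosAngle_nonneg {n : ℕ} (x y : Fin n → ℂ) : 0 ≤ cosAngle x y :=
  div_nonneg (norm_nonneg _) (mul_nonneg (hnorm_nonneg x) (hnorm_nonneg y))

theorem sinAngle_le_sinAngle {n : ℕ} {x y z : Fin n → ℂ} (h : cosAngle x z ≤ cosAngle x y) :
    sinAngle x y ≤ sinAngle x z := by
  unfold sinAngle
  gcongr
  exact cosAngle_nonneg x z

open Module.End in
theorem Matrix.IsHermitian.mul_hnorm_le_hnorm_mulVec {n : ℕ} {A : Matrix (Fin n) (Fin n) ℂ}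
    (hA : A.IsHermitian) {c : ℝ} (hc : ∀ μ v, Eigenpair A μ v → c ≤ ‖μ‖) (y : Fin n → ℂ) :
    c * hnorm y ≤ hnorm (A *ᵥ y) := by
  rw [hnorm_eq_norm_toLp_s13, hnorm_eq_norm_toLp_s13]
  refine (isSymmetric_toEuclideanLin_iff.mpr hA).mul_norm_le_norm_apply (fun μ hμ => ?_) _
  obtain ⟨w, hw⟩ := hμ.exists_hasEigenvector
  refine hc μ w.ofLp ⟨fun h => hw.2 (congrArg (WithLp.toLp 2) h), ?_⟩
  exact congrArg WithLp.ofLp (mem_eigenspace_iff.mp hw.1)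

theorem Matrix.IsHermitian.star_dotProduct_mulVec_of_mulVec_eq_smul {R ι : Type*}
    [CommSemiring R] [StarRing R] [Fintype ι] {A : Matrix ι ι R} (hA : A.IsHermitian)
    {l : R} {x : ι → R} (hx : A *ᵥ x = l • x) (y : ι → R) :
    star x ⬝ᵥ (A *ᵥ y) = star l * (star x ⬝ᵥ y) := by
  rw [dotProduct_mulVec, ← hA.eq, ← star_mulVec, hx, star_smul, smul_dotProduct, smul_eq_mul]

theorem Matrix.IsHermitian.cosAngle_mulVec_le {n : ℕ} {A : Matrix (Fin n) (Fin n) ℂ}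
    (hA : A.IsHermitian) {l : ℂ} {x : Fin n → ℂ} (hx : A *ᵥ x = l • x)
    (hmin : ∀ μ v, Eigenpair A μ v → ‖l‖ ≤ ‖μ‖) (y : Fin n → ℂ) :
    cosAngle x (A *ᵥ y) ≤ cosAngle x y := by
  rcases eq_or_ne y 0 with rfl | hy
  · rw [mulVec_zero]
  have hnorm_Ay := hA.mul_hnorm_le_hnorm_mulVec hmin y
  have hratio : ‖l‖ / hnorm (A *ᵥ y) ≤ 1 / hnorm y := by
    rcases (hnorm_nonneg (A *ᵥ y)).eq_or_lt with h0 | hpos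
    -- if `A y = 0`, division by zero makes `cosAngle x (A y)` equal to `0`
    · rw [← h0, div_zero]
      exact (one_div_pos.mpr (hnorm_pos hy)).le
    · rw [div_le_div_iff₀ hpos (hnorm_pos hy)]
      linarith
  calc cosAngle x (A *ᵥ y)
      = ‖star x ⬝ᵥ y‖ / hnorm x * (‖l‖ / hnorm (A *ᵥ y)) := by
        rw [cosAngle, hA.star_dotProduct_mulVec_of_mulVec_eq_smul hx, norm_mul, norm_star]
        ring
    _ ≤ ‖star x ⬝ᵥ y‖ / hnorm x * (1 / hnorm y) :=
        mul_le_mul_of_nonneg_left hratio (div_nonneg (norm_nonneg _) (hnorm_nonneg x))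
    _ = cosAngle x y := by rw [cosAngle]; ring

theorem stmt13_multiplication_does_not_improve_general
    {n : ℕ} (A : Matrix (Fin n) (Fin n) ℂ) (hA : A.IsHermitian)
    (l : ℂ) (x : Fin n → ℂ) (hx : Eigenpair A l x)
    (hmin : ∀ μ v, Eigenpair A μ v → ‖l‖ ≤ ‖μ‖)
    (y : Fin n → ℂ) :
    sinAngle x y ≤ sinAngle x (A *ᵥ y) :=
  sinAngle_le_sinAngle (hA.cosAngle_mulVec_le hx.2 hmin y)

/-- for the smallest-magnitude eigenvalue, multiplication by A does not
improve the angle: sin∠(x, y) ≤ sin∠(x, Ay). -/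
theorem stmt13_multiplication_does_not_improve
    {n : ℕ} (A : Matrix (Fin n) (Fin n) ℂ) (hA : A.IsHermitian) (hdet : IsUnit A.det)
    (l : ℂ) (x : Fin n → ℂ) (hx : Eigenpair A l x)
    (hmin : ∀ μ v, Eigenpair A μ v → ‖l‖ ≤ ‖μ‖)
    (y : Fin n → ℂ) (hy : y ≠ 0) :
    sinAngle x y ≤ sinAngle x (A *ᵥ y) :=
  stmt13_multiplication_does_not_improve_general A hA l x hx hmin y
end

section
/- Let A be an n-by-n Hermitian matrix and X an n-by-k matrix with orthonormal columns spanning an invariant subspace of A (so AX = X(X*AX)). Let K = XW for a k-by-s matrix W of rank s, and let σ be a scalar. Then c satisfies K*(A − σI)²K c = ξ K*(A − σI)K c if and only if c satisfies W*(X*AX − σI)²W c = ξ W*(X*AX − σI)W c. Consequently, (θ, v) = (ξ + σ, Kc) is a harmonic Ritz pair of A with respect to range(K) and σ if and only if (θ, Wc) is a harmonic Ritz pair of the k-by-k Hermitian matrix X*AX with respect to range(W) and σ; in particular the harmonic Ritz values of A over range(K) coincide with those of X*AX over range(W). -/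
open Matrix
open scoped ComplexOrder

/-!
Since `A X = X B` with `B = Xᴴ A X`, the shifted matrix `A - σ` and its powers intertwine `X`
with `B - σ` and its powers in the same way, and `Xᴴ X = 1` makes `X` an isometry. Hence the
projected matrices `Kᴴ (A - σ)ʲ K` of the harmonic Rayleigh–Ritz procedure over `range (X W)`
equal `Wᴴ (B - σ)ʲ W`, and each Petrov–Galerkin condition for `A` over `range (X W)` is the
corresponding condition for `B` over `range W`.
-/

namespace Matrix

section Intertwining

variable {R : Type*} {m k : Type*} [Fintype m] [Fintype k]
  {A : Matrix m m R} {B : Matrix k k R} {X : Matrix m k R}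

theorem sub_smul_one_mul_of_mul_eq [CommRing R] [DecidableEq m] [DecidableEq k]
    (h : A * X = X * B) (σ : R) : (A - σ • 1) * X = X * (B - σ • 1) := by
  rw [Matrix.sub_mul, Matrix.mul_sub, h, Matrix.smul_mul, Matrix.mul_smul, Matrix.one_mul,
    Matrix.mul_one]

theorem pow_mul_of_mul_eq [Semiring R] [DecidableEq m] [DecidableEq k]
    (h : A * X = X * B) : ∀ p : ℕ, A ^ p * X = X * B ^ p
  | 0 => by rw [pow_zero, pow_zero, Matrix.one_mul, Matrix.mul_one]
  | p + 1 => by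
    rw [pow_succ, Matrix.mul_assoc, h, ← Matrix.mul_assoc, pow_mul_of_mul_eq h p,
      Matrix.mul_assoc, ← pow_succ]

theorem conjTranspose_mul_mul_mul_of_mul_eq [CommSemiring R] [StarRing R] [DecidableEq k]
    {s : Type*} (hX : Xᴴ * X = 1) (h : A * X = X * B) (W : Matrix k s R) :
    (X * W)ᴴ * A * (X * W) = Wᴴ * B * W := by
  rw [conjTranspose_mul, Matrix.mul_assoc, ← Matrix.mul_assoc A, h, Matrix.mul_assoc Wᴴ,
    Matrix.mul_assoc X, ← Matrix.mul_assoc Xᴴ, hX, Matrix.one_mul, Matrix.mul_assoc]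

end Intertwining

section Isometry

variable {R : Type*} {m k : Type*} [Fintype m] [Fintype k] [DecidableEq k]
  {X : Matrix m k R}

theorem star_mulVec_dotProduct_mulVec [CommSemiring R] [StarRing R] (hX : Xᴴ * X = 1)
    (p q : k → R) : star (X *ᵥ p) ⬝ᵥ (X *ᵥ q) = star p ⬝ᵥ q := by
  rw [star_mulVec, dotProduct_mulVec, vecMul_vecMul, hX, vecMul_one]

theorem mulVec_injective_of_conjTranspose_mul_self_eq_one [Semiring R] [Star R]
    (hX : Xᴴ * X = 1) : Function.Injective X.mulVec := fun u v huv => by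
  simpa only [mulVec_mulVec, hX, one_mulVec] using congrArg (Xᴴ *ᵥ ·) huv

end Isometry

end Matrix

open Matrix

section HarmonicRitz

variable {n k : ℕ} {A : Matrix (Fin n) (Fin n) ℂ} {B : Matrix (Fin k) (Fin k) ℂ}
  {X : Matrix (Fin n) (Fin k) ℂ}

theorem harmonicRitzPair_map_mulVecLin_iff (hX : Xᴴ * X = 1) (h : A * X = X * B)
    (σ θ : ℂ) (V : Submodule ℂ (Fin k → ℂ)) (u : Fin k → ℂ) :
    HarmonicRitzPair A σ (V.map X.mulVecLin) θ (X *ᵥ u) ↔ HarmonicRitzPair B σ V θ u := by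
  have hinj := mulVec_injective_of_conjTranspose_mul_self_eq_one hX
  have hmem : ∀ w, X *ᵥ w ∈ V.map X.mulVecLin ↔ w ∈ V := fun w =>
    ⟨fun ⟨w', hw', hw'w⟩ => hinj hw'w ▸ hw', fun hw => Submodule.mem_map_of_mem hw⟩
  have hcond : ∀ y, star ((A - σ • 1) *ᵥ (X *ᵥ y)) ⬝ᵥ (A *ᵥ (X *ᵥ u) - θ • X *ᵥ u) =
      star ((B - σ • 1) *ᵥ y) ⬝ᵥ (B *ᵥ u - θ • u) := fun y => by
    rw [mulVec_mulVec, mulVec_mulVec, sub_smul_one_mul_of_mul_eq h, h, ← mulVec_mulVec,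
      ← mulVec_mulVec, ← mulVec_smul, ← mulVec_sub, star_mulVec_dotProduct_mulVec hX]
  refine and_congr (hmem u) (and_congr (hinj.ne_iff' (mulVec_zero X)) ⟨?_, ?_⟩)
  · intro hAcond y hy
    rw [← hcond]
    exact hAcond _ ((hmem y).2 hy)
  · rintro hBcond _ ⟨y, hy, rfl⟩
    rw [mulVecLin_apply, hcond]
    exact hBcond y hy

theorem setOf_harmonicRitzPair_map_mulVecLin (hX : Xᴴ * X = 1) (h : A * X = X * B)
    (σ : ℂ) (V : Submodule ℂ (Fin k → ℂ)) :
    {θ | ∃ v, HarmonicRitzPair A σ (V.map X.mulVecLin) θ v} =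
      {θ | ∃ u, HarmonicRitzPair B σ V θ u} := by
  ext θ
  constructor
  · rintro ⟨v, hv⟩
    obtain ⟨u, -, rfl⟩ := hv.1
    exact ⟨u, (harmonicRitzPair_map_mulVecLin_iff hX h σ θ V u).1 hv⟩
  · rintro ⟨u, hu⟩
    exact ⟨X *ᵥ u, (harmonicRitzPair_map_mulVecLin_iff hX h σ θ V u).2 hu⟩

end HarmonicRitz

theorem stmt15_harmonic_reduction_invariant_general
    {n k s : ℕ} (A : Matrix (Fin n) (Fin n) ℂ)
    (X : Matrix (Fin n) (Fin k) ℂ) (hXon : Xᴴ * X = 1)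
    (hXinv : A * X = X * (Xᴴ * A * X))
    (W : Matrix (Fin k) (Fin s) ℂ)
    (K : Matrix (Fin n) (Fin s) ℂ) (hKXW : K = X * W)
    (σ : ℝ) :
    (∀ (ξ : ℂ) (c : Fin s → ℂ),
        ((Kᴴ * (A - (σ : ℂ) • 1) ^ 2 * K) *ᵥ c =
            ξ • ((Kᴴ * (A - (σ : ℂ) • 1) * K) *ᵥ c) ↔
          (Wᴴ * (Xᴴ * A * X - (σ : ℂ) • 1) ^ 2 * W) *ᵥ c =
            ξ • ((Wᴴ * (Xᴴ * A * X - (σ : ℂ) • 1) * W) *ᵥ c))) ∧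
      (∀ (θ : ℂ) (c : Fin s → ℂ),
        (HarmonicRitzPair A (σ : ℂ) (LinearMap.range K.mulVecLin) θ (K *ᵥ c) ↔
          HarmonicRitzPair (Xᴴ * A * X) (σ : ℂ) (LinearMap.range W.mulVecLin) θ
            (W *ᵥ c))) ∧
      {θ : ℂ | ∃ v, HarmonicRitzPair A (σ : ℂ) (LinearMap.range K.mulVecLin) θ v} =
        {θ : ℂ | ∃ v, HarmonicRitzPair (Xᴴ * A * X) (σ : ℂ)
          (LinearMap.range W.mulVecLin) θ v} := by
  subst hKXW
  have hshift := sub_smul_one_mul_of_mul_eq hXinv (σ : ℂ)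
  have hrange : LinearMap.range (X * W).mulVecLin =
      (LinearMap.range W.mulVecLin).map X.mulVecLin := by
    rw [mulVecLin_mul, LinearMap.range_comp]
  refine ⟨fun ξ c => ?_, fun θ c => ?_, ?_⟩
  · rw [conjTranspose_mul_mul_mul_of_mul_eq hXon hshift,
      conjTranspose_mul_mul_mul_of_mul_eq hXon (pow_mul_of_mul_eq hshift 2)]
  · rw [hrange, ← mulVec_mulVec]
    exact harmonicRitzPair_map_mulVecLin_iff hXon hXinv _ θ _ (W *ᵥ c)
  · rw [hrange]
    exact setOf_harmonicRitzPair_map_mulVecLin hXon hXinv _ _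

/-- reduction of the harmonic Rayleigh–Ritz procedure for A over
range(XW) to the one for X*AX over range(W), when range(X) is A-invariant. -/
theorem stmt15_harmonic_reduction_invariant
    {n k s : ℕ} (A : Matrix (Fin n) (Fin n) ℂ) (hA : A.IsHermitian)
    (X : Matrix (Fin n) (Fin k) ℂ) (hXon : Xᴴ * X = 1)
    (hXinv : A * X = X * (Xᴴ * A * X))
    (W : Matrix (Fin k) (Fin s) ℂ)
    (hW : LinearIndependent ℂ (fun j : Fin s => Wᵀ j))
    (K : Matrix (Fin n) (Fin s) ℂ) (hKXW : K = X * W)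
    (σ : ℝ) :
    (∀ (ξ : ℂ) (c : Fin s → ℂ),
        ((Kᴴ * (A - (σ : ℂ) • 1) ^ 2 * K) *ᵥ c =
            ξ • ((Kᴴ * (A - (σ : ℂ) • 1) * K) *ᵥ c) ↔
          (Wᴴ * (Xᴴ * A * X - (σ : ℂ) • 1) ^ 2 * W) *ᵥ c =
            ξ • ((Wᴴ * (Xᴴ * A * X - (σ : ℂ) • 1) * W) *ᵥ c))) ∧
      (∀ (θ : ℂ) (c : Fin s → ℂ),
        (HarmonicRitzPair A (σ : ℂ) (LinearMap.range K.mulVecLin) θ (K *ᵥ c) ↔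
          HarmonicRitzPair (Xᴴ * A * X) (σ : ℂ) (LinearMap.range W.mulVecLin) θ
            (W *ᵥ c))) ∧
      {θ : ℂ | ∃ v, HarmonicRitzPair A (σ : ℂ) (LinearMap.range K.mulVecLin) θ v} =
        {θ : ℂ | ∃ v, HarmonicRitzPair (Xᴴ * A * X) (σ : ℂ)
          (LinearMap.range W.mulVecLin) θ v} :=
  stmt15_harmonic_reduction_invariant_general A X hXon hXinv W K hKXW σ
end

section
/- Let A be an n-by-n Hermitian matrix and σ ∉ Λ(A). If T = |A − σI|^{-1} (the inverse of the matrix absolute value of A − σI), then T is Hermitian positive definite, commutes with A, and the condition number κ(T^{1/2}(A − σI)) = |ν_max/ν_min| of T^{1/2}(A − σI) (ratio of its largest to smallest magnitude eigenvalues) equals κ(A − σI)^{1/2} = ((max_{λ_j ∈ Λ(A)} |λ_j − σ|) / (min_{λ_j ∈ Λ(A)} |λ_j − σ|))^{1/2}. -/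
open Matrix
open scoped ComplexOrder

/-!
Anything commuting with `C²`, for `C` positive semidefinite, commutes with `C = √(C²)`. Hence
everything commuting with `S = A - σI` (in particular `A` and `S`) commutes with `|S|`, with
`T = |S|⁻¹` and with `T^{1/2}`. Then `(T^{1/2} S)² = T S² = |S|`, so `(T^{1/2} S)⁴ = S²`, and
by spectral mapping the eigenvalue moduli of `T^{1/2} S` are the square roots of those of `S`.
-/

section Commute

variable {n : Type*} [Fintype n] [DecidableEq n]

open scoped MatrixOrder in
theorem Matrix.PosSemidef.commute_of_commute_mul_self {𝕜 : Type*} [RCLike 𝕜]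
    {C X : Matrix n n 𝕜} (hC : C.PosSemidef) (h : Commute (C * C) X) : Commute C X := by
  have h_sqrt := h.cfc_nnreal NNReal.sqrt
  rwa [← CFC.sqrt_eq_cfc, CFC.sqrt_mul_self C hC.nonneg] at h_sqrt

theorem Matrix.commute_nonsing_inv_left {R : Type*} [CommRing R] {B X : Matrix n n R}
    (hB : IsUnit B) (h : Commute B X) : Commute B⁻¹ X := by
  obtain ⟨u, rfl⟩ := hB
  rw [nonsing_inv_eq_ringInverse, Ring.inverse_unit]
  exact (h.symm.units_inv_right).symm

end Commute

section Spectrum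

variable {𝕜 R : Type*} [NormedField 𝕜] [IsAlgClosed 𝕜] [Ring R] [Algebra 𝕜 R]

theorem image_norm_spectrum_eq_sqrt_image_norm_spectrum_mul_self (a : R) :
    norm '' spectrum 𝕜 a = Real.sqrt '' (norm '' spectrum 𝕜 (a * a)) := by
  rw [← sq, spectrum.map_pow_of_pos a two_pos, Set.image_image, Set.image_image]
  refine Set.image_congr fun μ _ => ?_
  rw [norm_pow, Real.sqrt_sq (norm_nonneg μ)]

theorem image_norm_spectrum_eq_of_mul_self_eq {a b : R} (h : a * a = b * b) :
    norm '' spectrum 𝕜 a = norm '' spectrum 𝕜 b := by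
  rw [image_norm_spectrum_eq_sqrt_image_norm_spectrum_mul_self a, h,
    ← image_norm_spectrum_eq_sqrt_image_norm_spectrum_mul_self b]

end Spectrum

theorem Real.sSup_image_sqrt {s : Set ℝ} (hs : BddAbove s) :
    sSup (Real.sqrt '' s) = √(sSup s) := by
  rcases s.eq_empty_or_nonempty with rfl | hne
  · simp
  · exact (Real.sqrt_monotone.map_csSup_of_continuousAt
      Real.continuous_sqrt.continuousAt hne hs).symm

theorem Real.sInf_image_sqrt {s : Set ℝ} (hs : BddBelow s) :
    sInf (Real.sqrt '' s) = √(sInf s) := by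
  rcases s.eq_empty_or_nonempty with rfl | hne
  · simp
  · exact (Real.sqrt_monotone.map_csInf_of_continuousAt
      Real.continuous_sqrt.continuousAt hne hs).symm

theorem specCond_eq_sSup_div_sInf {n : ℕ} (M : Matrix (Fin n) (Fin n) ℂ) :
    specCond M = sSup (norm '' spectrum ℂ M) / sInf (norm '' spectrum ℂ M) := by
  simp only [specCond, Set.image, eq_comm]

theorem specCond_eq_sqrt_specCond_of_mul_self {n : ℕ} {M B : Matrix (Fin n) (Fin n) ℂ}
    (h : M * M * (M * M) = B * B) : specCond M = √(specCond B) := by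
  have h_norms : norm '' spectrum ℂ M = Real.sqrt '' (norm '' spectrum ℂ B) := by
    rw [image_norm_spectrum_eq_sqrt_image_norm_spectrum_mul_self M,
      image_norm_spectrum_eq_of_mul_self_eq h]
  have h_fin : (norm '' spectrum ℂ B).Finite := (finite_spectrum B).image _
  rw [specCond_eq_sSup_div_sInf, specCond_eq_sSup_div_sInf, h_norms,
    Real.sSup_image_sqrt h_fin.bddAbove, Real.sInf_image_sqrt h_fin.bddBelow,
    Real.sqrt_div (Real.sSup_nonneg ?_)]
  rintro _ ⟨μ, -, rfl⟩
  exact norm_nonneg μ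

theorem stmt19_absolute_value_preconditioner_general
    {n : ℕ} (A : Matrix (Fin n) (Fin n) ℂ)
    (σ : ℝ)
    (S : Matrix (Fin n) (Fin n) ℂ) (hS : S = A - (σ : ℂ) • 1)
    (absS : Matrix (Fin n) (Fin n) ℂ) (habsPD : absS.PosDef)
    (habs : absS * absS = S * S)
    (T : Matrix (Fin n) (Fin n) ℂ) (hT : T = absS⁻¹)
    (Tsqrt : Matrix (Fin n) (Fin n) ℂ) (hTs : Tsqrt.PosDef)
    (hTsq : Tsqrt * Tsqrt = T) :
    T.PosDef ∧ T * A = A * T ∧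
      specCond (Tsqrt * S) = Real.sqrt (specCond S) := by
  have hSA : Commute S A :=
    hS ▸ ((Commute.refl A).sub_right ((Commute.one_right A).smul_right _)).symm
  have hT_comm : ∀ X, Commute S X → Commute T X := fun X hX =>
    hT ▸ commute_nonsing_inv_left habsPD.isUnit
      (habsPD.posSemidef.commute_of_commute_mul_self (habs ▸ hX.mul_left hX))
  have hTsS : Commute Tsqrt S :=
    hTs.posSemidef.commute_of_commute_mul_self (hTsq ▸ hT_comm S (Commute.refl S))
  have h_sq : Tsqrt * S * (Tsqrt * S) = absS := by
    rw [hTsS.symm.mul_mul_mul_comm, hTsq, ← habs, hT,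
      nonsing_inv_mul_cancel_left _ _ ((isUnit_iff_isUnit_det absS).mp habsPD.isUnit)]
  exact ⟨hT ▸ habsPD.inv, hT_comm A hSA,
    specCond_eq_sqrt_specCond_of_mul_self (h_sq ▸ habs)⟩

/-- the absolute value preconditioner T = |A − σI|⁻¹ is HPD, commutes with A,
and κ(T^{1/2}(A − σI)) = κ(A − σI)^{1/2}. -/
theorem stmt19_absolute_value_preconditioner
    {n : ℕ} (A : Matrix (Fin n) (Fin n) ℂ) (hA : A.IsHermitian)
    (σ : ℝ) (hσ : (σ : ℂ) ∉ spectrum ℂ A)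
    (S : Matrix (Fin n) (Fin n) ℂ) (hS : S = A - (σ : ℂ) • 1)
    (absS : Matrix (Fin n) (Fin n) ℂ) (habsPD : absS.PosDef)
    (habs : absS * absS = S * S)
    (T : Matrix (Fin n) (Fin n) ℂ) (hT : T = absS⁻¹)
    (Tsqrt : Matrix (Fin n) (Fin n) ℂ) (hTs : Tsqrt.PosDef)
    (hTsq : Tsqrt * Tsqrt = T) :
    T.PosDef ∧ T * A = A * T ∧
      specCond (Tsqrt * S) = Real.sqrt (specCond S) :=
  stmt19_absolute_value_preconditioner_general A σ S hS absS habsPD habs T hT Tsqrt hTs hTsq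
end
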